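/- arXiv:2107.00095 — 3 statements merged into one kernel-verified Lean document; each statement's English description precedes it below -/
import Mathlib

section
/- Let W : ℝⁿ → ℝ be an even convex differentiable function. Then for any r, q > 0 and any λ ∈ (0,1], and any point x with W(x/(1-λ)) ≤ q + W(0) (where λ < 1) or more precisely x ∈ (1-λ)·{y : W(y) ≤ q + W(0)}, and any z with W(z) ≤ r + W(0), one has ⟨∇W(x), z⟩ ≤ ((1-λ)/λ)q + r. -/
open Set Filter
open scoped RealInnerProductSpace Pointwise Topology

/-- Subgradient inequality for a convex differentiable function. -/
lemma grad_inner_le_sub {n : ℕ} (W : EuclideanSpace ℝ (Fin n) → ℝ)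
    (hconv : ConvexOn ℝ univ W) (hdiff : Differentiable ℝ W)
    (x v : EuclideanSpace ℝ (Fin n)) :
    ⟪gradient W x, v - x⟫ ≤ W v - W x := by
  have hgrad : ⟪gradient W x, v - x⟫ = fderiv ℝ W x (v - x) := by
    rw [gradient]
    exact InnerProductSpace.toDual_symm_apply
  rw [hgrad]
  -- the line function
  set g : ℝ → ℝ := fun t => W (x + t • (v - x)) with hg
  have hline : HasDerivAt (fun t : ℝ => x + t • (v - x)) (v - x) 0 := by
    simpa using ((hasDerivAt_id (0:ℝ)).smul_const (v - x)).const_add x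
  have hgd : HasDerivAt g (fderiv ℝ W x (v - x)) 0 := by
    have := (hdiff (x + (0:ℝ) • (v - x))).hasFDerivAt.comp_hasDerivAt 0 hline
    simp only [zero_smul, add_zero] at this
    exact this
  have htend : Tendsto (fun t => (g t - g 0) / t) (𝓝[>] (0:ℝ)) (𝓝 (fderiv ℝ W x (v - x))) := by
    have := hasDerivAt_iff_tendsto_slope.mp hgd
    have h2 : Tendsto (slope g 0) (𝓝[>] (0:ℝ)) (𝓝 (fderiv ℝ W x (v - x))) :=
      this.mono_left (nhdsWithin_mono _ (fun t ht => ne_of_gt ht))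
    refine h2.congr fun t => ?_
    simp [slope, div_eq_inv_mul]
  refine le_of_tendsto htend ?_
  filter_upwards [Ioo_mem_nhdsGT_of_mem (Set.left_mem_Ico.mpr one_pos)] with t ht
  have ht0 : 0 < t := ht.1
  have ht1 : t < 1 := ht.2
  have hcvx : W (x + t • (v - x)) ≤ (1 - t) * W x + t * W v := by
    have := hconv.2 (mem_univ x) (mem_univ v) (by linarith : (0:ℝ) ≤ 1 - t)
      (le_of_lt ht0) (by ring)
    calc W (x + t • (v - x)) = W ((1 - t) • x + t • v) := by
          congr 1
          simp [smul_sub, sub_smul]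
          abel
      _ ≤ (1 - t) * W x + t * W v := by simpa using this
  have : g t - g 0 ≤ t * (W v - W x) := by
    simp only [hg, zero_smul, add_zero]
    nlinarith
  rw [div_le_iff₀ ht0] at *
  calc (g t - g 0) ≤ t * (W v - W x) := this
    _ = (W v - W x) * t := by ring

/-- Klartag–Milman type lemma: for an even convex differentiable `W`, the gradient of `W`
on the dilated sublevel set `(1-λ)·{W ≤ q + W 0}` pairs with any point of `{W ≤ r + W 0}`
by at most `((1-λ)/λ)q + r`. -/
theorem gradient_sublevel_duality {n : ℕ} (W : EuclideanSpace ℝ (Fin n) → ℝ)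
    (hconv : ConvexOn ℝ univ W) (hdiff : Differentiable ℝ W)
    (heven : ∀ y, W (-y) = W y)
    (r q l : ℝ) (hr : 0 < r) (hq : 0 < q) (hl : l ∈ Ioc (0 : ℝ) 1)
    (x z : EuclideanSpace ℝ (Fin n))
    (hx : x ∈ (1 - l) • {y : EuclideanSpace ℝ (Fin n) | W y ≤ q + W 0})
    (hz : W z ≤ r + W 0) :
    ⟪gradient W x, z⟫ ≤ ((1 - l) / l) * q + r := by
  obtain ⟨hl0, hl1⟩ := hl
  obtain ⟨y, hy, rfl⟩ := hx
  simp only [mem_setOf_eq] at hy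
  -- W 0 is the minimum
  have hmin : ∀ v, W 0 ≤ W v := by
    intro v
    have := hconv.2 (mem_univ v) (mem_univ (-v)) (by norm_num : (0:ℝ) ≤ 1/2)
      (by norm_num : (0:ℝ) ≤ 1/2) (by norm_num)
    simp only [smul_eq_mul, heven] at this
    have h0 : (1/2 : ℝ) • v + (1/2 : ℝ) • (-v) = 0 := by
      simp [smul_neg]
    rw [h0] at this
    linarith
  set xx := (1 - l) • y
  have h1 : ⟪gradient W xx, z - xx⟫ ≤ W z - W xx := grad_inner_le_sub W hconv hdiff xx z
  have h2 : ⟪gradient W xx, y - xx⟫ ≤ W y - W xx := grad_inner_le_sub W hconv hdiff xx y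
  have hyx : y - xx = l • y := by
    simp only [xx, sub_smul, one_smul]
    abel
  rw [hyx, real_inner_smul_right] at h2
  have hxy : ⟪gradient W xx, y⟫ ≤ (W y - W xx) / l := by
    rw [le_div_iff₀ hl0]
    linarith [h2]
  have hgx : ⟪gradient W xx, xx⟫ ≤ ((1 - l) / l) * (W y - W xx) := by
    have : ⟪gradient W xx, xx⟫ = (1 - l) * ⟪gradient W xx, y⟫ :=
      real_inner_smul_right (gradient W xx) y (1 - l)
    rw [this]
    have h1l : 0 ≤ 1 - l := by linarith
    calc (1 - l) * ⟪gradient W xx, y⟫ ≤ (1 - l) * ((W y - W xx) / l) :=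
          mul_le_mul_of_nonneg_left hxy h1l
      _ = ((1 - l) / l) * (W y - W xx) := by ring
  have hinner : ⟪gradient W xx, z⟫ = ⟪gradient W xx, z - xx⟫ + ⟪gradient W xx, xx⟫ := by
    rw [inner_sub_right]; ring
  have hWxx : W 0 ≤ W xx := hmin xx
  have hWy : W y - W xx ≤ q := by linarith
  have hWz : W z - W xx ≤ r := by linarith
  have h1l : 0 ≤ (1 - l) / l := div_nonneg (by linarith) (le_of_lt hl0)
  calc ⟪gradient W xx, z⟫ = ⟪gradient W xx, z - xx⟫ + ⟪gradient W xx, xx⟫ := hinner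
    _ ≤ (W z - W xx) + ((1 - l) / l) * (W y - W xx) := by linarith
    _ ≤ r + ((1 - l) / l) * q := by nlinarith
    _ = ((1 - l) / l) * q + r := by ring
end

section
/- Let μ be a rotation-invariant probability measure on ℝⁿ with absolutely continuous density, let q < 0, and let K ⊂ ℝⁿ be a convex body containing the origin. Let B(K) be the Euclidean ball centered at the origin with μ(B(K)) = μ(K). Then ∫_K |x|^q dμ(x) ≤ ∫_{B(K)} |x|^q dμ(x). -/
open MeasureTheory Metric

/-- For a rotation-invariant absolutely continuous probability measure `μ` on ℝⁿ, a convex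
body `K` containing the origin, and `q < 0`: the `q`-th moment of `|x|` over `K` is at
most that over the centered ball of the same measure (all integrals assumed finite). -/
theorem neg_moment_ball_max {n : ℕ} (μ : Measure (EuclideanSpace ℝ (Fin n)))
    [IsProbabilityMeasure μ] (hac : μ ≪ volume)
    (hrot : ∀ U : EuclideanSpace ℝ (Fin n) ≃ₗᵢ[ℝ] EuclideanSpace ℝ (Fin n),
      μ.map U = μ)
    (q : ℝ) (hq : q < 0)
    (K : Set (EuclideanSpace ℝ (Fin n))) (hKconv : Convex ℝ K)
    (hKcomp : IsCompact K) (hKint : (interior K).Nonempty) (hK0 : (0 : EuclideanSpace ℝ (Fin n)) ∈ K)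
    (R : ℝ) (hR : 0 ≤ R) (hball : μ (closedBall 0 R) = μ K)
    (hint1 : IntegrableOn (fun x => ‖x‖ ^ q) K μ)
    (hint2 : IntegrableOn (fun x => ‖x‖ ^ q) (closedBall (0 : EuclideanSpace ℝ (Fin n)) R) μ) :
    ∫ x in K, ‖x‖ ^ q ∂μ
      ≤ ∫ x in closedBall (0 : EuclideanSpace ℝ (Fin n)) R, ‖x‖ ^ q ∂μ := by
  set B := closedBall (0 : EuclideanSpace ℝ (Fin n)) R with hB
  by_cases hn : n = 0
  · -- subsingleton space: K = B
    subst hn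
    have hsub : Subsingleton (EuclideanSpace ℝ (Fin 0)) := inferInstance
    have : K = B := by
      ext x
      have hx : x = 0 := Subsingleton.elim x 0
      subst hx
      simp [hB, hR, hK0]
    rw [this]
  · have hn1 : Nontrivial (EuclideanSpace ℝ (Fin n)) := by
      haveI : Nonempty (Fin n) := Fin.pos_iff_nonempty.mp (Nat.pos_of_ne_zero hn)
      infer_instance
    rcases eq_or_lt_of_le hR with hR0 | hR0
    · -- R = 0 : both sets have μ-measure 0
      have hB0 : μ B = 0 := by
        have : B = {0} := by rw [hB, ← hR0, closedBall_zero]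
        rw [this]
        exact hac (measure_singleton 0)
      have hK0' : μ K = 0 := by rw [← hball, hB0]
      rw [Measure.restrict_eq_zero.mpr hB0, Measure.restrict_eq_zero.mpr hK0']
    · -- main case R > 0
      have hKm : MeasurableSet K := hKcomp.measurableSet
      have hBm : MeasurableSet B := measurableSet_closedBall
      have hsplitK : ∫ x in K ∩ B, ‖x‖ ^ q ∂μ + ∫ x in K \ B, ‖x‖ ^ q ∂μ
          = ∫ x in K, ‖x‖ ^ q ∂μ := integral_inter_add_diff hBm hint1
      have hsplitB : ∫ x in B ∩ K, ‖x‖ ^ q ∂μ + ∫ x in B \ K, ‖x‖ ^ q ∂μ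
          = ∫ x in B, ‖x‖ ^ q ∂μ := integral_inter_add_diff hKm hint2
      have hmeq : μ (K \ B) = μ (B \ K) := by
        have h1 : μ (K ∩ B) + μ (K \ B) = μ K := measure_inter_add_diff K hBm
        have h2 : μ (B ∩ K) + μ (B \ K) = μ B := measure_inter_add_diff B hKm
        rw [Set.inter_comm] at h2
        have := h1.trans (hball.symm.trans h2.symm)
        exact (ENNReal.add_right_inj (measure_ne_top μ _)).mp this
      have key : ∫ x in K \ B, ‖x‖ ^ q ∂μ ≤ ∫ x in B \ K, ‖x‖ ^ q ∂μ := by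
        have hle1 : ∫ x in K \ B, ‖x‖ ^ q ∂μ ≤ ∫ x in K \ B, R ^ q ∂μ := by
          apply setIntegral_mono_on (hint1.mono_set Set.diff_subset)
            (integrableOn_const (measure_ne_top μ _)) (hKm.diff hBm)
          intro x hx
          have hxR : R ≤ ‖x‖ := by
            by_contra h
            exact hx.2 (mem_closedBall_zero_iff.mpr (le_of_not_ge h))
          exact Real.rpow_le_rpow_of_nonpos hR0 hxR hq.le
        have hle2 : ∫ x in B \ K, R ^ q ∂μ ≤ ∫ x in B \ K, ‖x‖ ^ q ∂μ := by
          apply setIntegral_mono_on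
            (integrableOn_const (measure_ne_top μ _))
            (hint2.mono_set Set.diff_subset) (hBm.diff hKm)
          intro x hx
          have hx0 : x ≠ 0 := fun h => hx.2 (h ▸ hK0)
          have hxpos : 0 < ‖x‖ := norm_pos_iff.mpr hx0
          exact Real.rpow_le_rpow_of_nonpos hxpos (mem_closedBall_zero_iff.mp hx.1) hq.le
        calc ∫ x in K \ B, ‖x‖ ^ q ∂μ ≤ ∫ x in K \ B, R ^ q ∂μ := hle1
          _ = ∫ x in B \ K, R ^ q ∂μ := by
              simp [setIntegral_const, measureReal_def, hmeq]
          _ ≤ ∫ x in B \ K, ‖x‖ ^ q ∂μ := hle2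
      calc ∫ x in K, ‖x‖ ^ q ∂μ
          = ∫ x in K ∩ B, ‖x‖ ^ q ∂μ + ∫ x in K \ B, ‖x‖ ^ q ∂μ := hsplitK.symm
        _ ≤ ∫ x in B ∩ K, ‖x‖ ^ q ∂μ + ∫ x in B \ K, ‖x‖ ^ q ∂μ := by
            rw [Set.inter_comm]; exact add_le_add le_rfl key
        _ = ∫ x in B, ‖x‖ ^ q ∂μ := hsplitB
end

section
/- Suppose a probability measure μ on ℝⁿ satisfies the correlation inequality ∫ e^{-f} e^{-g} dμ ≤ (∫ e^{-f} dμ)(∫ e^{-g} dμ) for all functions f, g in a class 𝓤 closed under positive scalar multiplication. Then for all f, g ∈ 𝓤 with f integrable, ∫ f e^{-g} dμ ≥ (∫ f dμ)(∫ e^{-g} dμ). -/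
open MeasureTheory Real Filter

/-- If a probability measure `μ` satisfies the correlation inequality
`∫ e^{-f} e^{-g} dμ ≤ (∫ e^{-f} dμ)(∫ e^{-g} dμ)` on a class `𝓤` of nonnegative measurable
functions closed under positive scaling, then `∫ f e^{-g} dμ ≥ (∫ f dμ)(∫ e^{-g} dμ)` for
all integrable `f ∈ 𝓤` and `g ∈ 𝓤`. -/
theorem correlation_to_linear {n : ℕ} (μ : Measure (EuclideanSpace ℝ (Fin n)))
    [IsProbabilityMeasure μ]
    (𝓤 : Set ((EuclideanSpace ℝ (Fin n)) → ℝ))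
    (hnonneg : ∀ f ∈ 𝓤, ∀ x, 0 ≤ f x)
    (hmeas : ∀ f ∈ 𝓤, Measurable f)
    (hscale : ∀ f ∈ 𝓤, ∀ ε : ℝ, 0 < ε → (fun x => ε * f x) ∈ 𝓤)
    (hcorr : ∀ f ∈ 𝓤, ∀ g ∈ 𝓤,
      ∫ x, exp (-f x) * exp (-g x) ∂μ
        ≤ (∫ x, exp (-f x) ∂μ) * ∫ x, exp (-g x) ∂μ) :
    ∀ f ∈ 𝓤, ∀ g ∈ 𝓤, Integrable f μ →
      (∫ x, f x ∂μ) * ∫ x, exp (-g x) ∂μ ≤ ∫ x, f x * exp (-g x) ∂μ := by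
  intro f hf g hg hfint
  have hmf := hmeas f hf
  have hmg := hmeas g hg
  have hf0 := hnonneg f hf
  set B := ∫ x, exp (-g x) ∂μ with hBdef
  have hB0 : 0 ≤ B := integral_nonneg fun x => (exp_pos _).le
  -- integrability of f * e^{-g}
  have hfe : Integrable (fun x => f x * exp (-g x)) μ := by
    refine hfint.mono' ((hmf.mul (hmg.neg.exp)).aestronglyMeasurable) ?_
    filter_upwards with x
    rw [Real.norm_eq_abs, abs_mul, abs_of_nonneg (hf0 x), abs_of_nonneg (exp_pos _).le]
    calc f x * exp (-g x) ≤ f x * 1 :=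
          mul_le_mul_of_nonneg_left (exp_le_one_iff.2 (neg_nonpos.2 (hnonneg g hg x))) (hf0 x)
      _ = f x := mul_one _
  set K := ∫ x, f x * exp (-g x) ∂μ with hKdef
  -- integrability of e^{-h} for measurable nonneg h
  have hIexp : ∀ h : (EuclideanSpace ℝ (Fin n)) → ℝ, Measurable h → (∀ x, 0 ≤ h x) →
      Integrable (fun x => exp (-h x)) μ := by
    intro h hh hh0
    refine (integrable_const (1:ℝ)).mono' (hh.neg.exp.aestronglyMeasurable) ?_
    filter_upwards with x
    rw [Real.norm_eq_abs, abs_of_nonneg (exp_pos _).le]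
    exact exp_le_one_iff.2 (neg_nonpos.2 (hh0 x))
  -- key inequality for each ε > 0
  have key : ∀ ε : ℝ, 0 < ε → (∫ x, (1 - exp (-(ε * f x))) / ε ∂μ) * B ≤ K := by
    intro ε hε
    have hεf : (fun x => ε * f x) ∈ 𝓤 := hscale f hf ε hε
    have hεf0 : ∀ x, 0 ≤ ε * f x := fun x => mul_nonneg hε.le (hf0 x)
    have hmεf : Measurable fun x => ε * f x := hmf.const_mul ε
    have hIεf : Integrable (fun x => exp (-(ε * f x))) μ := hIexp _ hmεf hεf0
    have hIprod : Integrable (fun x => exp (-(ε * f x)) * exp (-g x)) μ := by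
      refine (integrable_const (1:ℝ)).mono'
        ((hmεf.neg.exp.mul hmg.neg.exp).aestronglyMeasurable) ?_
      filter_upwards with x
      rw [Real.norm_eq_abs, abs_of_nonneg (mul_nonneg (exp_pos _).le (exp_pos _).le)]
      calc exp (-(ε * f x)) * exp (-g x) ≤ 1 * 1 := by
            apply mul_le_mul (exp_le_one_iff.2 (neg_nonpos.2 (hεf0 x)))
              (exp_le_one_iff.2 (neg_nonpos.2 (hnonneg g hg x))) (exp_pos _).le zero_le_one
        _ = 1 := mul_one 1
    -- lower bound : B - ε K ≤ ∫ e^{-εf} e^{-g}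
    have ineq1 : B - ε * K ≤ ∫ x, exp (-(ε * f x)) * exp (-g x) ∂μ := by
      have : ∫ x, (exp (-g x) - ε * (f x * exp (-g x))) ∂μ
          ≤ ∫ x, exp (-(ε * f x)) * exp (-g x) ∂μ := by
        refine integral_mono ((hIexp g hmg (hnonneg g hg)).sub (hfe.const_mul ε)) hIprod ?_
        intro x
        have h1 : 1 - ε * f x ≤ exp (-(ε * f x)) := by
          have := add_one_le_exp (-(ε * f x)); linarith
        have := mul_le_mul_of_nonneg_right h1 (exp_pos (-g x)).le
        simp only []
        nlinarith [exp_pos (-g x)]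
      rwa [integral_sub (hIexp g hmg (hnonneg g hg)) (hfe.const_mul ε), integral_const_mul] at this
    have ineq2 := hcorr _ hεf g hg
    set S := ∫ x, exp (-(ε * f x)) ∂μ with hSdef
    -- so (1 - S) * B ≤ ε * K
    have ineq3 : (1 - S) * B ≤ ε * K := by nlinarith [ineq1, ineq2]
    -- identify the integral
    have hint : (∫ x, (1 - exp (-(ε * f x))) / ε ∂μ) = (1 - S) / ε := by
      have h1 : ∫ x, (1 - exp (-(ε * f x))) ∂μ = 1 - S := by
        rw [integral_sub (integrable_const 1) hIεf, integral_const]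
        simp [hSdef]
      calc (∫ x, (1 - exp (-(ε * f x))) / ε ∂μ)
          = ∫ x, ε⁻¹ * (1 - exp (-(ε * f x))) ∂μ := by
            congr 1; ext x; rw [div_eq_inv_mul]
        _ = ε⁻¹ * (1 - S) := by rw [integral_const_mul, h1]
        _ = (1 - S) / ε := by rw [div_eq_inv_mul]
    rw [hint, div_mul_eq_mul_div, div_le_iff₀ hε]
    linarith
  -- take limit along ε = 1/(n+1)
  set u : ℕ → ℝ := fun m => ((m : ℝ) + 1)⁻¹ with hudef
  have hu_pos : ∀ m : ℕ, 0 < u m := fun m => by positivity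
  have hu_lim : Tendsto u atTop (nhds 0) := tendsto_one_div_add_atTop_nhds_zero_nat.congr
    (by intro m; simp [hudef, one_div])
  have hlim : Tendsto (fun m => ∫ x, (1 - exp (-(u m * f x))) / u m ∂μ) atTop
      (nhds (∫ x, f x ∂μ)) := by
    refine tendsto_integral_of_dominated_convergence f
      (fun m => ((((hmf.const_mul (u m)).neg.exp.const_sub 1).div_const (u m)).aestronglyMeasurable))
      hfint ?_ ?_
    · intro m
      filter_upwards with x
      have hm := hu_pos m
      have ht : 0 ≤ f x := hf0 x
      have h1 : exp (-(u m * f x)) ≤ 1 := exp_le_one_iff.2 (neg_nonpos.2 (by positivity))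
      have h2 : 1 - u m * f x ≤ exp (-(u m * f x)) := by
        have := add_one_le_exp (-(u m * f x)); linarith
      rw [Real.norm_eq_abs, abs_of_nonneg (div_nonneg (by linarith) hm.le)]
      rw [div_le_iff₀ hm]
      nlinarith
    · filter_upwards with x
      have hd : HasDerivAt (fun s : ℝ => 1 - exp (-(s * f x))) (f x) 0 := by
        have h1 : HasDerivAt (fun s : ℝ => s * f x) (f x) 0 := hasDerivAt_mul_const (f x)
        have h2 := (h1.neg).exp
        have h3 := (hasDerivAt_const (0:ℝ) (1:ℝ)).sub h2
        simpa [Pi.sub_def] using h3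
      rw [hasDerivAt_iff_tendsto_slope] at hd
      have hu_ne : Tendsto u atTop (nhdsWithin 0 {(0:ℝ)}ᶜ) := by
        refine tendsto_nhdsWithin_of_tendsto_nhds_of_eventually_within _ hu_lim ?_
        filter_upwards with m
        exact (hu_pos m).ne'
      have := hd.comp hu_ne
      refine this.congr ?_
      intro m
      simp only [Function.comp_apply, slope_def_field]
      simp
  have hlimB : Tendsto (fun m => (∫ x, (1 - exp (-(u m * f x))) / u m ∂μ) * B) atTop
      (nhds ((∫ x, f x ∂μ) * B)) := hlim.mul_const B
  exact le_of_tendsto hlimB (Eventually.of_forall fun m => key (u m) (hu_pos m))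
end
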